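/- arXiv:2503.17375 — 7 statements merged into one kernel-verified Lean document; each statement's English description precedes it below -/
import Mathlib

section
/- Let μ ∈ ℝ and σ ≥ 0, and let X = exp(μ + σZ) and X′ = exp(μ + σZ′), where Z and Z′ are independent standard normal random variables. Then the Gini coefficient of the LogNormal(μ, σ²) distribution satisfies E[|X − X′|] / (2·E[X]) = 2Φ(σ/√2) − 1. -/
/-!
For `σ ≥ 0` the map `t ↦ exp (σ t)` is monotone, so
`|e^{σx} - e^{σy}| = 2 e^{σ max x y} - e^{σx} - e^{σy}` and everything reduces to
`E[e^{σ max(Z, Z')}] = 2 E[e^{σZ} Φ(Z)]`. Tilting the standard Gaussian by `e^{σz}` gives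
`e^{σ²/2}` times `N(σ, 1)`, so this is `2 e^{σ²/2} P(Z' - W ≤ 0)` with `W ~ N(σ, 1)` independent
of `Z'`; as `Z' - W ~ N(-σ, 2)`, that probability is `Φ(σ/√2)`.
-/

open MeasureTheory ProbabilityTheory Real Set
open scoped ENNReal NNReal

lemma abs_exp_sub_exp_eq (μ : ℝ) {σ : ℝ} (hσ : 0 ≤ σ) (x y : ℝ) :
    |rexp (μ + σ * x) - rexp (μ + σ * y)|
      = rexp μ * (2 * rexp (σ * max x y) - rexp (σ * x) - rexp (σ * y)) := by
  have hmono : Monotone fun t ↦ rexp (σ * t) :=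
    fun a b hab ↦ exp_le_exp.2 (mul_le_mul_of_nonneg_left hab hσ)
  rw [hmono.map_max, exp_add, exp_add, ← mul_sub, abs_mul, abs_of_pos (exp_pos μ),
    ← max_sub_min_eq_abs']
  congr 1
  linarith [min_add_max (rexp (σ * x)) (rexp (σ * y))]

lemma exp_mul_mul_gaussianPDFReal (m t x : ℝ) {v : ℝ≥0} (hv : v ≠ 0) :
    rexp (t * x) * gaussianPDFReal m v x
      = rexp (m * t + v * t ^ 2 / 2) * gaussianPDFReal (m + v * t) v x := by
  have hv' : (v : ℝ) ≠ 0 := NNReal.coe_ne_zero.mpr hv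
  simp only [gaussianPDFReal]
  rw [mul_left_comm, mul_left_comm (rexp _), ← exp_add, ← exp_add]
  congr 2
  field_simp
  ring

lemma gaussianReal_withDensity_exp_mul (m t : ℝ) {v : ℝ≥0} (hv : v ≠ 0) :
    (gaussianReal m v).withDensity (fun x ↦ ENNReal.ofReal (rexp (t * x)))
      = ENNReal.ofReal (rexp (m * t + v * t ^ 2 / 2)) • gaussianReal (m + v * t) v := by
  rw [gaussianReal_of_var_ne_zero _ hv, gaussianReal_of_var_ne_zero _ hv,
    ← withDensity_mul _ (measurable_gaussianPDF _ _) (by fun_prop),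
    ← withDensity_smul _ (measurable_gaussianPDF _ _)]
  congr 1
  ext x
  simp only [Pi.mul_apply, Pi.smul_apply, smul_eq_mul, gaussianPDF]
  rw [← ENNReal.ofReal_mul (gaussianPDFReal_nonneg _ _ _), ← ENNReal.ofReal_mul (exp_nonneg _),
    mul_comm, exp_mul_mul_gaussianPDFReal m t x hv]

lemma gaussianReal_zero_one_map_sqrt_mul_add (m : ℝ) (v : ℝ≥0) :
    (gaussianReal 0 1).map (fun z ↦ √v * z + m) = gaussianReal m v := by
  rw [← Function.comp_def (· + m) (√v * ·),
    ← Measure.map_map (measurable_add_const m) (measurable_const_mul _),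
    gaussianReal_map_const_mul, gaussianReal_map_add_const]
  congr 1
  · simp
  · ext; simp

lemma gaussianReal_Iic (m x : ℝ) {v : ℝ≥0} (hv : v ≠ 0) :
    gaussianReal m v (Iic x) = gaussianReal 0 1 (Iic ((x - m) / √v)) := by
  have hpos : 0 < √(v : ℝ) := Real.sqrt_pos.mpr (by positivity)
  rw [← gaussianReal_zero_one_map_sqrt_mul_add, Measure.map_apply (by fun_prop) measurableSet_Iic]
  congr 1
  ext z
  simp only [mem_preimage, mem_Iic, le_div_iff₀ hpos]
  constructor <;> intro h <;> linarith

lemma lintegral_measure_Iic_eq_conv (μ ν : Measure ℝ) [SFinite μ] [SFinite ν] :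
    ∫⁻ x, ν (Iic x) ∂μ = (ν ∗ μ.map (-·)) (Iic 0) := by
  rw [Measure.conv, Measure.map_apply (by fun_prop) measurableSet_Iic,
    Measure.prod_apply_symm (measurableSet_Iic.preimage (by fun_prop)),
    lintegral_map _ (by fun_prop)]
  · congr 1
    ext x
    congr 1
    ext z
    simp
  · exact measurable_measure_prodMk_right (measurableSet_Iic.preimage (by fun_prop))

lemma lintegral_prod_self_max (μ : Measure ℝ) [SFinite μ] [NullSingletonClass μ] {f : ℝ → ℝ≥0∞}
    (hf : Measurable f) :
    ∫⁻ p, f (max p.1 p.2) ∂(μ.prod μ) = 2 * ∫⁻ x, f x * μ (Iic x) ∂μ := by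
  have hsplit : ∀ p : ℝ × ℝ, f (max p.1 p.2)
      = {p | p.2 ≤ p.1}.indicator (fun p ↦ f p.1) p
        + {p | p.1 < p.2}.indicator (fun p ↦ f p.2) p := by
    rintro ⟨x, y⟩
    rcases le_or_gt y x with h | h
    · simp [h, h.not_gt]
    · simp [h, h.not_ge, h.le]
  have hle : Measurable ({p : ℝ × ℝ | p.2 ≤ p.1}.indicator fun p ↦ f p.1) :=
    (hf.comp measurable_fst).indicator (measurableSet_le measurable_snd measurable_fst)
  have hlt : Measurable ({p : ℝ × ℝ | p.1 < p.2}.indicator fun p ↦ f p.2) :=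
    (hf.comp measurable_snd).indicator (measurableSet_lt measurable_fst measurable_snd)
  simp_rw [hsplit]
  rw [lintegral_add_left hle, two_mul, lintegral_prod _ hle.aemeasurable,
    lintegral_prod_symm _ hlt.aemeasurable]
  congr 1
  · congr 1
    ext x
    rw [← setLIntegral_const, ← lintegral_indicator measurableSet_Iic]
    rfl
  · congr 1
    ext y
    rw [← measure_congr (Iio_ae_eq_Iic (μ := μ)), ← setLIntegral_const,
      ← lintegral_indicator measurableSet_Iio]
    rfl

lemma lintegral_exp_mul_max_gaussianReal (σ : ℝ) :
    ∫⁻ p, ENNReal.ofReal (rexp (σ * max p.1 p.2)) ∂((gaussianReal 0 1).prod (gaussianReal 0 1))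
      = ENNReal.ofReal (2 * rexp (σ ^ 2 / 2) * cdf (gaussianReal 0 1) (σ / √2)) := by
  have := nullSingletonClass_gaussianReal (μ := 0) one_ne_zero
  have hcdf : Measurable fun x ↦ gaussianReal 0 1 (Iic x) := by
    simp_rw [← ofReal_cdf]
    exact (cdf _).mono.measurable.ennreal_ofReal
  have htilt : ∫⁻ x, ENNReal.ofReal (rexp (σ * x)) * gaussianReal 0 1 (Iic x) ∂(gaussianReal 0 1)
      = ∫⁻ x, gaussianReal 0 1 (Iic x)
          ∂((gaussianReal 0 1).withDensity fun x ↦ ENNReal.ofReal (rexp (σ * x))) :=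
    (lintegral_withDensity_eq_lintegral_mul _ (by fun_prop) hcdf).symm
  rw [lintegral_prod_self_max _ (f := fun x ↦ ENNReal.ofReal (rexp (σ * x))) (by fun_prop),
    htilt, gaussianReal_withDensity_exp_mul 0 σ one_ne_zero, lintegral_smul_measure,
    lintegral_measure_Iic_eq_conv, gaussianReal_map_neg, gaussianReal_conv_gaussianReal,
    gaussianReal_Iic _ _ (by norm_num), ← ofReal_cdf, smul_eq_mul,
    ENNReal.ofReal_mul (by positivity), ENNReal.ofReal_mul zero_le_two,
    ENNReal.ofReal_ofNat, mul_assoc]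
  norm_num

lemma integrable_exp_mul_max_gaussianReal (σ : ℝ) :
    Integrable (fun p : ℝ × ℝ ↦ rexp (σ * max p.1 p.2))
      ((gaussianReal 0 1).prod (gaussianReal 0 1)) := by
  refine ⟨by fun_prop, (hasFiniteIntegral_iff_ofReal (ae_of_all _ fun _ ↦ (exp_pos _).le)).2 ?_⟩
  rw [lintegral_exp_mul_max_gaussianReal]
  exact ENNReal.ofReal_lt_top

lemma integral_exp_mul_max_gaussianReal (σ : ℝ) :
    ∫ p, rexp (σ * max p.1 p.2) ∂((gaussianReal 0 1).prod (gaussianReal 0 1))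
      = 2 * rexp (σ ^ 2 / 2) * cdf (gaussianReal 0 1) (σ / √2) := by
  rw [integral_eq_lintegral_of_nonneg_ae (ae_of_all _ fun _ ↦ (exp_pos _).le) (by fun_prop),
    lintegral_exp_mul_max_gaussianReal,
    ENNReal.toReal_ofReal (mul_nonneg (by positivity) (cdf_nonneg _ _))]

lemma integral_exp_mul_gaussianReal (σ : ℝ) :
    ∫ z, rexp (σ * z) ∂(gaussianReal 0 1) = rexp (σ ^ 2 / 2) := by
  simpa [mgf] using congrFun (mgf_fun_id_gaussianReal (μ := 0) (v := 1)) σ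

lemma integral_exp_const_add_mul_gaussianReal (μ σ : ℝ) :
    ∫ z, rexp (μ + σ * z) ∂(gaussianReal 0 1) = rexp μ * rexp (σ ^ 2 / 2) := by
  simp_rw [exp_add]
  rw [integral_const_mul, integral_exp_mul_gaussianReal]

lemma integral_abs_exp_sub_exp_gaussianReal (μ : ℝ) {σ : ℝ} (hσ : 0 ≤ σ) :
    ∫ p : ℝ × ℝ, |rexp (μ + σ * p.1) - rexp (μ + σ * p.2)|
        ∂((gaussianReal 0 1).prod (gaussianReal 0 1))
      = rexp μ * rexp (σ ^ 2 / 2) * (4 * cdf (gaussianReal 0 1) (σ / √2) - 2) := by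
  have hexp := integrable_exp_mul_gaussianReal (μ := 0) (v := 1) σ
  simp_rw [abs_exp_sub_exp_eq μ hσ]
  rw [integral_const_mul, integral_sub, integral_sub, integral_const_mul,
    integral_fun_fst (fun z ↦ rexp (σ * z)), integral_fun_snd (fun z ↦ rexp (σ * z)),
    integral_exp_mul_max_gaussianReal, integral_exp_mul_gaussianReal]
  · simp only [probReal_univ, one_smul]
    ring
  · exact (integrable_exp_mul_max_gaussianReal σ).const_mul 2
  · exact hexp.comp_fst _
  · exact ((integrable_exp_mul_max_gaussianReal σ).const_mul 2).sub (hexp.comp_fst _)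
  · exact hexp.comp_snd _

/-- Gini coefficient of the `LogNormal(μ, σ²)` distribution: if `X = exp(μ + σZ)` and
`X′ = exp(μ + σZ′)` with `Z, Z′` independent standard normals, then
`E[|X − X′|] / (2·E[X]) = 2Φ(σ/√2) − 1`, where `Φ` is the standard normal cdf. -/
theorem lognormal_gini (μ σ : ℝ) (hσ : 0 ≤ σ) :
    (∫ z : ℝ × ℝ, |Real.exp (μ + σ * z.1) - Real.exp (μ + σ * z.2)|
        ∂((gaussianReal 0 1).prod (gaussianReal 0 1)))
      / (2 * ∫ z : ℝ, Real.exp (μ + σ * z) ∂(gaussianReal 0 1))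
    = 2 * cdf (gaussianReal 0 1) (σ / Real.sqrt 2) - 1 := by
  rw [integral_abs_exp_sub_exp_gaussianReal μ hσ, integral_exp_const_add_mul_gaussianReal]
  field_simp
  ring
end

section
/- Let R* > −100, V > 0, μ₀ ∈ ℝ, σ₀ > 0, and set α := ln(1 + R*/100), β := (1/2)·ln(1 + (V/100)²). For p ∈ (0,1), define the quantiles Q_p(t) := exp(μ₀ + (α − β)t + √(σ₀² + 2βt)·ζ_p) for t = 0, 1. Then the growth incidence curve GIC(p) := 100·(Q_p(1)/Q_p(0) − 1) satisfies GIC(p) = R* + 100·(1 + R*/100)·( exp( (√(1 + (1/σ₀²)·ln(1 + (V/100)²)) − 1)·σ₀·ζ_p ) / √(1 + (V/100)²) − 1 ). -/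
open MeasureTheory ProbabilityTheory Real

/-!
Dividing the two quantiles, the location parameter `μ₀` cancels and
`Q_p(1)/Q_p(0) = e^α · e^{-β} · exp((√(σ₀² + 2β) − σ₀)·ζ_p)`. Here `e^α = 1 + R*/100`,
`e^β = √(1 + (V/100)²)` and `√(σ₀² + 2β) = σ₀·√(1 + σ₀⁻²·2β)` with `2β = ln(1 + (V/100)²)`.
-/

namespace Real

theorem sqrt_sq_add_eq_mul_sqrt {σ : ℝ} (hσ : 0 < σ) (c : ℝ) :
    √(σ ^ 2 + c) = σ * √(1 + 1 / σ ^ 2 * c) := by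
  have hsplit : σ ^ 2 + c = σ ^ 2 * (1 + 1 / σ ^ 2 * c) := by
    field_simp
  rw [hsplit, sqrt_mul (sq_nonneg σ), sqrt_sq hσ.le]

theorem exp_half_mul_log {x : ℝ} (hx : 0 < x) : exp (1 / 2 * log x) = √x := by
  rw [one_div_mul_eq_div, exp_half, exp_log hx]

end Real

theorem exp_flatGrowth_quantile_ratio (μ₀ σ₀ α β ζ : ℝ) (hσ₀ : 0 ≤ σ₀) :
    exp (μ₀ + (α - β) * 1 + √(σ₀ ^ 2 + 2 * β * 1) * ζ)
        / exp (μ₀ + (α - β) * 0 + √(σ₀ ^ 2 + 2 * β * 0) * ζ)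
      = exp α * exp ((√(σ₀ ^ 2 + 2 * β) - σ₀) * ζ) / exp β := by
  rw [← exp_sub, ← exp_add, ← exp_sub]
  congr 1
  simp only [mul_one, mul_zero, add_zero, sqrt_sq hσ₀]
  ring

theorem gic_flat_rp_general
    (Rstar V μ₀ σ₀ : ℝ) (hR : -100 < Rstar) (hσ₀ : 0 < σ₀)
    (α β : ℝ)
    (hα : α = Real.log (1 + Rstar / 100))
    (hβ : β = (1 / 2) * Real.log (1 + (V / 100) ^ 2))
    (ζ : ℝ)
    (Q : ℝ → ℝ)
    (hQ : ∀ t, Q t = Real.exp (μ₀ + (α - β) * t + Real.sqrt (σ₀ ^ 2 + 2 * β * t) * ζ)) :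
    100 * (Q 1 / Q 0 - 1)
      = Rstar + 100 * (1 + Rstar / 100) *
          (Real.exp ((Real.sqrt (1 + (1 / σ₀ ^ 2) * Real.log (1 + (V / 100) ^ 2)) - 1)
              * σ₀ * ζ)
            / Real.sqrt (1 + (V / 100) ^ 2) - 1) := by
  have hexpα : exp α = 1 + Rstar / 100 := by
    rw [hα, exp_log (by linarith)]
  have hexpβ : exp β = √(1 + (V / 100) ^ 2) := by
    rw [hβ, exp_half_mul_log (by positivity)]
  have h2β : 2 * β = log (1 + (V / 100) ^ 2) := by
    rw [hβ]; ring
  rw [hQ, hQ, exp_flatGrowth_quantile_ratio μ₀ σ₀ α β ζ hσ₀.le, hexpα, hexpβ, h2β,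
    sqrt_sq_add_eq_mul_sqrt hσ₀]
  ring_nf

/-- Growth Incidence Curve formula in the flat-growth log-normal model: with
`α = ln(1 + R*/100)`, `β = (1/2)·ln(1 + (V/100)²)`, quantiles
`Q_p(t) = exp(μ₀ + (α−β)t + √(σ₀² + 2βt)·ζ_p)` for `t = 0, 1`, where `ζ_p = Φ⁻¹(p)`,
the GIC `GIC(p) = 100·(Q_p(1)/Q_p(0) − 1)` satisfies
`GIC(p) = R* + 100·(1 + R*/100)·(exp((√(1 + σ₀⁻²·ln(1+(V/100)²)) − 1)·σ₀·ζ_p)/√(1+(V/100)²) − 1)`. -/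
theorem gic_flat_rp
    (Rstar V μ₀ σ₀ : ℝ) (hR : -100 < Rstar) (hV : 0 < V) (hσ₀ : 0 < σ₀)
    (α β : ℝ)
    (hα : α = Real.log (1 + Rstar / 100))
    (hβ : β = (1 / 2) * Real.log (1 + (V / 100) ^ 2))
    (p : ℝ) (hp : p ∈ Set.Ioo (0 : ℝ) 1)
    (ζ : ℝ) (hζ : cdf (gaussianReal 0 1) ζ = p)
    (Q : ℝ → ℝ)
    (hQ : ∀ t, Q t = Real.exp (μ₀ + (α - β) * t + Real.sqrt (σ₀ ^ 2 + 2 * β * t) * ζ)) :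
    100 * (Q 1 / Q 0 - 1)
      = Rstar + 100 * (1 + Rstar / 100) *
          (Real.exp ((Real.sqrt (1 + (1 / σ₀ ^ 2) * Real.log (1 + (V / 100) ^ 2)) - 1)
              * σ₀ * ζ)
            / Real.sqrt (1 + (V / 100) ^ 2) - 1) :=
  gic_flat_rp_general Rstar V μ₀ σ₀ hR hσ₀ α β hα hβ ζ Q hQ
end

section
/- Let μ₀ ∈ ℝ, σ₀ ≥ 0, α ∈ ℝ, β > 0, T₁ ≥ 0 with σ₀² + 2βT₁ > 0, and τ > 0. Let p₁, p₂ ∈ (0,1), and set q₁ = exp(μ₀ + (α − β)T₁ + √(σ₀² + 2βT₁)·ζ_{p₁}) and q₂ = exp(μ₀ + (α − β)(T₁ + τ) + √(σ₀² + 2β(T₁ + τ))·ζ_{p₂}). Let Z be standard normal and let X̃(T₁ + τ) = q₁·exp((α − β)τ + √(2βτ)·Z). Then P(X̃(T₁ + τ) ≥ q₂) = 1 − Φ( (1/√(ρτ))·( √(1 + ρτ)·ζ_{p₂} − ζ_{p₁} ) ), where ρ = 2β/(σ₀² + 2βT₁). -/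
open MeasureTheory ProbabilityTheory Real

/-! Taking logarithms, the event `X̃(T₁ + τ) ≥ q₂` is `Z ≥ c` with
`c = (√(s + 2βτ)·ζ₂ − √s·ζ₁) / √(2βτ)`, `s = σ₀² + 2βT₁`: the drift terms `μ₀` and `(α − β)t`
cancel. Dividing numerator and denominator by `√s` turns `c` into the stated argument, and since
the standard Gaussian has no atoms, `P(Z ≥ c) = 1 − Φ(c)`. -/

theorem measureReal_Ici_eq_one_sub_cdf (μ : Measure ℝ) [IsProbabilityMeasure μ]
    [NullSingletonClass μ] (c : ℝ) : μ.real (Set.Ici c) = 1 - cdf μ c := by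
  rw [measureReal_congr Ioi_ae_eq_Ici.symm, ← Set.compl_Iic,
    probReal_compl_eq_one_sub measurableSet_Iic, cdf_eq_real]

theorem setOf_exp_le_mul_exp {x y a b : ℝ} (hb : 0 < b) :
    {z : ℝ | exp x ≤ exp y * exp (a + b * z)} = Set.Ici ((x - y - a) / b) := by
  ext z
  rw [Set.mem_ofPred_eq, Set.mem_Ici, ← exp_add, exp_le_exp, div_le_iff₀' hb]
  constructor <;> intro h <;> linarith

theorem one_div_sqrt_div_mul_sub {s d : ℝ} (hs : 0 < s) (hd : 0 < d) (u v : ℝ) :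
    1 / √(d / s) * (√(1 + d / s) * u - v) = (√(s + d) * u - √s * v) / √d := by
  have h1 : 1 + d / s = (s + d) / s := by field_simp
  have hss : 0 < √s := sqrt_pos.2 hs
  have hsd : 0 < √d := sqrt_pos.2 hd
  rw [h1, sqrt_div hd.le, sqrt_div (by positivity)]
  field_simp

theorem p1p2_mobility_general
    (μ₀ σ₀ α β T₁ τ : ℝ) (hβ : 0 < β)
    (hpos : 0 < σ₀ ^ 2 + 2 * β * T₁) (hτ : 0 < τ)
    (ζ₁ ζ₂ : ℝ)
    (q₁ q₂ ρ : ℝ)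
    (hq₁ : q₁ = Real.exp (μ₀ + (α - β) * T₁ + Real.sqrt (σ₀ ^ 2 + 2 * β * T₁) * ζ₁))
    (hq₂ : q₂ = Real.exp (μ₀ + (α - β) * (T₁ + τ)
        + Real.sqrt (σ₀ ^ 2 + 2 * β * (T₁ + τ)) * ζ₂))
    (hρ : ρ = 2 * β / (σ₀ ^ 2 + 2 * β * T₁)) :
    ((gaussianReal 0 1)
        {z : ℝ | q₂ ≤ q₁ * Real.exp ((α - β) * τ + Real.sqrt (2 * β * τ) * z)}).toReal
      = 1 - cdf (gaussianReal 0 1)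
          ((1 / Real.sqrt (ρ * τ)) * (Real.sqrt (1 + ρ * τ) * ζ₂ - ζ₁)) := by
  have hd : 0 < 2 * β * τ := by positivity
  have : NullSingletonClass (gaussianReal 0 1) := nullSingletonClass_gaussianReal one_ne_zero
  have hρτ : ρ * τ = 2 * β * τ / (σ₀ ^ 2 + 2 * β * T₁) := by rw [hρ]; ring
  have hvar : σ₀ ^ 2 + 2 * β * (T₁ + τ) = σ₀ ^ 2 + 2 * β * T₁ + 2 * β * τ := by ring
  rw [hq₁, hq₂, setOf_exp_le_mul_exp (sqrt_pos.2 hd), ← measureReal_def,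
    measureReal_Ici_eq_one_sub_cdf, hρτ, one_div_sqrt_div_mul_sub hpos hd, hvar]
  congr 2
  ring

/-- `(P₁ → P₂)`-mobility formula in the flat-growth log-normal model: with
`q₁ = exp(μ₀ + (α−β)T₁ + √(σ₀² + 2βT₁)·ζ_{p₁})`,
`q₂ = exp(μ₀ + (α−β)(T₁+τ) + √(σ₀² + 2β(T₁+τ))·ζ_{p₂})`, and
`X̃(T₁+τ) = q₁·exp((α−β)τ + √(2βτ)·Z)` for `Z` standard normal,
`P(X̃(T₁+τ) ≥ q₂) = 1 − Φ((1/√(ρτ))·(√(1+ρτ)·ζ_{p₂} − ζ_{p₁}))`, where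
`ρ = 2β/(σ₀² + 2βT₁)`. -/
theorem p1p2_mobility
    (μ₀ σ₀ α β T₁ τ : ℝ) (hσ₀ : 0 ≤ σ₀) (hβ : 0 < β) (hT₁ : 0 ≤ T₁)
    (hpos : 0 < σ₀ ^ 2 + 2 * β * T₁) (hτ : 0 < τ)
    (p₁ p₂ : ℝ) (hp₁ : p₁ ∈ Set.Ioo (0 : ℝ) 1) (hp₂ : p₂ ∈ Set.Ioo (0 : ℝ) 1)
    (ζ₁ ζ₂ : ℝ)
    (hζ₁ : cdf (gaussianReal 0 1) ζ₁ = p₁) (hζ₂ : cdf (gaussianReal 0 1) ζ₂ = p₂)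
    (q₁ q₂ ρ : ℝ)
    (hq₁ : q₁ = Real.exp (μ₀ + (α - β) * T₁ + Real.sqrt (σ₀ ^ 2 + 2 * β * T₁) * ζ₁))
    (hq₂ : q₂ = Real.exp (μ₀ + (α - β) * (T₁ + τ)
        + Real.sqrt (σ₀ ^ 2 + 2 * β * (T₁ + τ)) * ζ₂))
    (hρ : ρ = 2 * β / (σ₀ ^ 2 + 2 * β * T₁)) :
    ((gaussianReal 0 1)
        {z : ℝ | q₂ ≤ q₁ * Real.exp ((α - β) * τ + Real.sqrt (2 * β * τ) * z)}).toReal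
      = 1 - cdf (gaussianReal 0 1)
          ((1 / Real.sqrt (ρ * τ)) * (Real.sqrt (1 + ρ * τ) * ζ₂ - ζ₁)) :=
  p1p2_mobility_general μ₀ σ₀ α β T₁ τ hβ hpos hτ ζ₁ ζ₂ q₁ q₂ ρ hq₁ hq₂ hρ
end

section
/- Let σ₀ ≥ 0, β > 0, τ > 0, and p₁, p₂ ∈ (0,1) with p₂ > p₁. For T₁ ≥ 0 set ρ(T₁) = 2β/(σ₀² + 2βT₁). Then the (p₁ → p₂)-mobility M(T₁) := 1 − Φ( (1/√(ρ(T₁)τ))·( √(1 + ρ(T₁)τ)·ζ_{p₂} − ζ_{p₁} ) ) satisfies lim_{T₁ → ∞} M(T₁) = 0. That is, for a fixed time window τ, the probability of traversing from the p₁-quantile to the p₂-quantile tends to zero as the starting time T₁ tends to infinity. -/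
open MeasureTheory ProbabilityTheory Real Filter Topology

/-! As `T₁ → ∞` the normalised window `g = ρ(T₁)τ` tends to `0⁺`, so
`√(1 + g) ζ₂ − ζ₁ → ζ₂ − ζ₁ > 0` while `1/√g → ∞`; the argument of `Φ` therefore tends to `∞`
and `1 − Φ` to `0`. -/

lemma tendsto_div_const_add_mul_atTop_nhdsGT_zero {a b c : ℝ} (hb : 0 < b) (hc : 0 < c) :
    Tendsto (fun t : ℝ => c / (a + b * t)) atTop (𝓝[>] 0) := by
  have hden : Tendsto (fun t : ℝ => a + b * t) atTop atTop :=
    tendsto_atTop_add_const_left _ _ (tendsto_id.const_mul_atTop hb)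
  exact tendsto_nhdsWithin_iff.mpr
    ⟨tendsto_const_nhds.div_atTop hden,
      (hden.eventually_gt_atTop 0).mono fun _ h => div_pos hc h⟩

lemma tendsto_one_div_sqrt_mul_sqrt_one_add_sub_atTop {α : Type*} {l : Filter α} {g : α → ℝ}
    (hg : Tendsto g l (𝓝[>] 0)) {z₁ z₂ : ℝ} (hz : z₁ < z₂) :
    Tendsto (fun x => 1 / √(g x) * (√(1 + g x) * z₂ - z₁)) l atTop := by
  have hg0 : Tendsto g l (𝓝 0) := tendsto_nhds_of_tendsto_nhdsWithin hg
  have hsqrt : Tendsto (fun x => √(g x)) l (𝓝[>] 0) := by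
    refine tendsto_nhdsWithin_iff.mpr ⟨?_, ?_⟩
    · simpa using hg0.sqrt
    · exact (tendsto_nhdsWithin_iff.mp hg).2.mono fun _ h => sqrt_pos.mpr h
  have hinv : Tendsto (fun x => 1 / √(g x)) l atTop := by
    simpa only [one_div, Pi.inv_def] using hsqrt.inv_tendsto_nhdsGT_zero
  have hnum : Tendsto (fun x => √(1 + g x) * z₂ - z₁) l (𝓝 (z₂ - z₁)) := by
    have hs : Tendsto (fun x => √(1 + g x)) l (𝓝 1) := by
      simpa using (hg0.const_add 1).sqrt
    simpa using (hs.mul_const z₂).sub_const z₁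
  exact hinv.atTop_mul_pos (sub_pos.mpr hz) hnum

theorem mobility_limit_T1_general
    (σ₀ β τ : ℝ) (hβ : 0 < β) (hτ : 0 < τ)
    (p₁ p₂ : ℝ)
    (hlt : p₁ < p₂)
    (ζ₁ ζ₂ : ℝ)
    (hζ₁ : cdf (gaussianReal 0 1) ζ₁ = p₁) (hζ₂ : cdf (gaussianReal 0 1) ζ₂ = p₂)
    (ρ : ℝ → ℝ) (hρ : ∀ T₁, ρ T₁ = 2 * β / (σ₀ ^ 2 + 2 * β * T₁)) :
    Filter.Tendsto
      (fun T₁ : ℝ =>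
        1 - cdf (gaussianReal 0 1)
          ((1 / Real.sqrt (ρ T₁ * τ)) * (Real.sqrt (1 + ρ T₁ * τ) * ζ₂ - ζ₁)))
      Filter.atTop (nhds 0) := by
  have hζ : ζ₁ < ζ₂ := (monotone_cdf (gaussianReal 0 1)).reflect_lt (hζ₁ ▸ hζ₂ ▸ hlt)
  have hg : Tendsto (fun T₁ => ρ T₁ * τ) atTop (𝓝[>] 0) := by
    convert tendsto_div_const_add_mul_atTop_nhdsGT_zero (a := σ₀ ^ 2) (by positivity : 0 < 2 * β)
      (by positivity : 0 < 2 * β * τ) using 2 with T₁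
    rw [hρ, div_mul_eq_mul_div]
  have hcdf := (tendsto_cdf_atTop (gaussianReal 0 1)).comp
    (tendsto_one_div_sqrt_mul_sqrt_one_add_sub_atTop hg hζ)
  simpa using hcdf.const_sub 1

/-- Vanishing mobility for a fixed time window: with `ρ(T₁) = 2β/(σ₀² + 2βT₁)` and
`p₂ > p₁`, the `(p₁ → p₂)`-mobility
`M(T₁) = 1 − Φ((1/√(ρ(T₁)τ))·(√(1+ρ(T₁)τ)·ζ_{p₂} − ζ_{p₁}))` tends to `0` as the
starting time `T₁ → ∞`. -/
theorem mobility_limit_T1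
    (σ₀ β τ : ℝ) (hσ₀ : 0 ≤ σ₀) (hβ : 0 < β) (hτ : 0 < τ)
    (p₁ p₂ : ℝ) (hp₁ : p₁ ∈ Set.Ioo (0 : ℝ) 1) (hp₂ : p₂ ∈ Set.Ioo (0 : ℝ) 1)
    (hlt : p₁ < p₂)
    (ζ₁ ζ₂ : ℝ)
    (hζ₁ : cdf (gaussianReal 0 1) ζ₁ = p₁) (hζ₂ : cdf (gaussianReal 0 1) ζ₂ = p₂)
    (ρ : ℝ → ℝ) (hρ : ∀ T₁, ρ T₁ = 2 * β / (σ₀ ^ 2 + 2 * β * T₁)) :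
    Filter.Tendsto
      (fun T₁ : ℝ =>
        1 - cdf (gaussianReal 0 1)
          ((1 / Real.sqrt (ρ T₁ * τ)) * (Real.sqrt (1 + ρ T₁ * τ) * ζ₂ - ζ₁)))
      Filter.atTop (nhds 0) :=
  mobility_limit_T1_general σ₀ β τ hβ hτ p₁ p₂ hlt ζ₁ ζ₂ hζ₁ hζ₂ ρ hρ
end

section
/- Let α : [0,1] → ℝ be continuously differentiable, let F₀ : [0,∞) → [0,1] be a continuously differentiable cumulative distribution function, and suppose q : (0,∞) × [0,∞) → (0,∞) is continuously differentiable and satisfies the implicit equation x = exp(α(F₀(q(x,t)))·t)·q(x,t) for all x > 0 and t ≥ 0 (in particular q(x,0) = x). Then the function F(x,t) := F₀(q(x,t)) satisfies the nonlinear transport equation ∂_t F(x,t) + α(F(x,t))·x·∂_x F(x,t) = 0 for all x > 0, t > 0, with F(x,0) = F₀(x). -/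
/-!
Differentiating the implicit equation `x = exp (α (F₀ q) t) q` in `t` and in `x` produces the
same factor `c = 1 + t q (α ∘ F₀)'(q)` in both, namely `∂ₜq · c = -α q` and
`∂ₓq · c · exp (α t) = 1`. Hence `c ≠ 0` and, since `x = exp (α t) q`, `∂ₜq + α x ∂ₓq = 0`;
the chain rule through `F₀` carries this over to `F = F₀ ∘ q`.
-/

open Real Set

open Filter Topology

theorem HasDerivAt.exp_comp_mul_mul {h r σ : ℝ → ℝ} {h' r' σ' z : ℝ}
    (hh : HasDerivAt h h' (r z)) (hr : HasDerivAt r r' z) (hσ : HasDerivAt σ σ' z) :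
    HasDerivAt (fun z => Real.exp (h (r z) * σ z) * r z)
      (Real.exp (h (r z) * σ z) * ((h' * r' * σ z + h (r z) * σ') * r z + r')) z := by
  have hexp : HasDerivAt (fun z => Real.exp (h (r z) * σ z))
      (Real.exp (h (r z) * σ z) * (h' * r' * σ z + h (r z) * σ')) z :=
    ((hh.comp z hr).fun_mul hσ).exp
  exact (hexp.fun_mul hr).congr_deriv (by ring)

theorem transport_of_eq_exp_mul {h : ℝ → ℝ} {q : ℝ → ℝ → ℝ} {x t ut ux : ℝ}
    (hh : DifferentiableAt ℝ h (q x t))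
    (hut : HasDerivAt (fun s => q x s) ut t) (hux : HasDerivAt (fun y => q y t) ux x)
    (h_time : ∀ᶠ s in 𝓝 t, x = Real.exp (h (q x s) * s) * q x s)
    (h_space : ∀ᶠ y in 𝓝 x, y = Real.exp (h (q y t) * t) * q y t) :
    ut + h (q x t) * x * ux = 0 := by
  set u := q x t
  set E := Real.exp (h u * t)
  set c := deriv h u * t * u + 1
  have hx : x = E * u := h_space.self_of_nhds
  have h_time' : E * ((deriv h u * ut * t + h u * 1) * u + ut) = 0 :=
    ((hh.hasDerivAt.exp_comp_mul_mul hut (hasDerivAt_id' t)).congr_of_eventuallyEq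
      h_time).unique (hasDerivAt_const t x)
  have h_space' : E * ((deriv h u * ux * t + h u * 0) * u + ux) = 1 :=
    ((HasDerivAt.exp_comp_mul_mul (r := fun y => q y t) hh.hasDerivAt hux
      (hasDerivAt_const x t)).congr_of_eventuallyEq h_space).unique (hasDerivAt_id' x)
  have hc_time : ut * c = -h u * u := by
    linear_combination (mul_eq_zero.mp h_time').resolve_left (exp_ne_zero _)
  have hc_space : E * ux * c = 1 := by linear_combination h_space'
  have hc : c ≠ 0 := right_ne_zero_of_mul_eq_one hc_space
  refine (mul_eq_zero.mp ?_).resolve_left hc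
  linear_combination hc_time + h u * u * hc_space + h u * ux * c * hx

theorem characteristics_solve_transport_general
    (α F₀ : ℝ → ℝ) (q : ℝ → ℝ → ℝ)
    (hα : ContDiff ℝ 1 α)
    (hF₀ : ContDiff ℝ 1 F₀)
    (hq : ContDiffOn ℝ 1 (fun z : ℝ × ℝ => q z.1 z.2) (Set.Ioi 0 ×ˢ Set.Ici 0))
    (himp : ∀ x > (0 : ℝ), ∀ t ≥ (0 : ℝ),
      x = Real.exp (α (F₀ (q x t)) * t) * q x t) :
    (∀ x > (0 : ℝ), F₀ (q x 0) = F₀ x) ∧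
      ∀ x > (0 : ℝ), ∀ t > (0 : ℝ),
        deriv (fun s => F₀ (q x s)) t
          + α (F₀ (q x t)) * x * deriv (fun y => F₀ (q y t)) x = 0 := by
  refine ⟨fun x hx => by simpa using congrArg F₀ (himp x hx 0 le_rfl).symm,
    fun x hx t ht => ?_⟩
  obtain ⟨L, hL⟩ : DifferentiableAt ℝ (fun z : ℝ × ℝ => q z.1 z.2) (x, t) :=
    (hq.differentiableOn one_ne_zero (x, t) ⟨hx, ht.le⟩).differentiableAt <|
      mem_of_superset ((isOpen_Ioi.prod isOpen_Ioi).mem_nhds ⟨hx, ht⟩)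
        (prod_mono subset_rfl Ioi_subset_Ici_self)
  have hut : HasDerivAt (fun s => q x s) (L (0, 1)) t :=
    hL.comp_hasDerivAt t ((hasDerivAt_const t x).prodMk (hasDerivAt_id' t))
  have hux : HasDerivAt (fun y => q y t) (L (1, 0)) x :=
    (hL.comp_hasDerivAt x ((hasDerivAt_id' x).prodMk (hasDerivAt_const x t)) :)
  have h_char : L (0, 1) + α (F₀ (q x t)) * x * L (1, 0) = 0 :=
    transport_of_eq_exp_mul (h := α ∘ F₀)
      ((hα.differentiable one_ne_zero).comp (hF₀.differentiable one_ne_zero) _) hut hux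
      ((eventually_gt_nhds ht).mono fun s hs => himp x hx s hs.le)
      ((eventually_gt_nhds hx).mono fun y hy => himp y hy t ht.le)
  have hF₀' := (hF₀.differentiable one_ne_zero (q x t)).hasDerivAt
  have hFt : HasDerivAt (fun s => F₀ (q x s)) (deriv F₀ (q x t) * L (0, 1)) t :=
    hF₀'.comp t hut
  have hFx : HasDerivAt (fun y => F₀ (q y t)) (deriv F₀ (q x t) * L (1, 0)) x :=
    hF₀'.comp x hux
  rw [hFt.deriv, hFx.deriv]
  linear_combination deriv F₀ (q x t) * h_char

/-- Method of characteristics for the income model with percentile-dependent growth and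
no randomness: if `q(x,t)` solves the implicit equation `x = exp(α(F₀(q(x,t)))·t)·q(x,t)`
(so in particular `q(x,0) = x`), then `F(x,t) := F₀(q(x,t))` solves the nonlinear
transport equation `∂ₜF + α(F)·x·∂ₓF = 0` for `x > 0, t > 0`, with `F(x,0) = F₀(x)`. -/
theorem characteristics_solve_transport
    (α F₀ : ℝ → ℝ) (q : ℝ → ℝ → ℝ)
    (hα : ContDiff ℝ 1 α)
    (hF₀ : ContDiff ℝ 1 F₀)
    (hF₀mono : MonotoneOn F₀ (Set.Ici 0))
    (hF₀range : ∀ x ≥ (0 : ℝ), F₀ x ∈ Set.Icc (0 : ℝ) 1)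
    (hq : ContDiffOn ℝ 1 (fun z : ℝ × ℝ => q z.1 z.2) (Set.Ioi 0 ×ˢ Set.Ici 0))
    (hqpos : ∀ x > (0 : ℝ), ∀ t ≥ (0 : ℝ), 0 < q x t)
    (himp : ∀ x > (0 : ℝ), ∀ t ≥ (0 : ℝ),
      x = Real.exp (α (F₀ (q x t)) * t) * q x t) :
    (∀ x > (0 : ℝ), F₀ (q x 0) = F₀ x) ∧
      ∀ x > (0 : ℝ), ∀ t > (0 : ℝ),
        deriv (fun s => F₀ (q x s)) t
          + α (F₀ (q x t)) * x * deriv (fun y => F₀ (q y t)) x = 0 :=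
  characteristics_solve_transport_general α F₀ q hα hF₀ hq himp
end

section
/- Let α : [0,1] → ℝ be continuously differentiable, let F₀ : [0,∞) → [0,1] be a continuously differentiable, strictly increasing cumulative distribution function with density f₀ = F₀′, and suppose q : (0,∞) × [0,∞) → (0,∞) is continuously differentiable and satisfies x = exp(α(F₀(q(x,t)))·t)·q(x,t) for all x > 0, t ≥ 0. Then for every x > 0, t ≥ 0 at which 1 + t·q(x,t)·α′(F₀(q(x,t)))·f₀(q(x,t)) ≠ 0, the spatial derivative of q satisfies ∂_x q(x,t) = exp(−α(F₀(q(x,t)))·t) / (1 + t·q(x,t)·α′(F₀(q(x,t)))·f₀(q(x,t))), and consequently the density f(x,t) := ∂_x [F₀(q(x,t))] equals f₀(q(x,t))·exp(−α(F₀(q(x,t)))·t) / (1 + t·q(x,t)·α′(F₀(q(x,t)))·f₀(q(x,t))). -/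
open Real Set

/-!
Fix `t`. The relation says that `y ↦ q(y,t)` is a right inverse, near `x`, of the map
`Q ↦ exp(α(F₀ Q)·t)·Q`, whose derivative at `Q` is `exp(α(F₀ Q)·t)·(1 + t·Q·α′(F₀ Q)·f₀(Q))`.
By the chain rule the product of the two derivatives is `1`, which gives `∂ₓq`; the density is then
`f₀(q)·∂ₓq`, once more by the chain rule.
-/

open Filter Topology

theorem DifferentiableOn.differentiableAt_comp_prodMk_const {𝕜 E F G : Type*}
    [NontriviallyNormedField 𝕜] [NormedAddCommGroup E] [NormedSpace 𝕜 E]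
    [NormedAddCommGroup F] [NormedSpace 𝕜 F] [NormedAddCommGroup G] [NormedSpace 𝕜 G]
    {f : E × F → G} {s : Set E} {u : Set F} {x : E} {y : F}
    (hf : DifferentiableOn 𝕜 f (s ×ˢ u)) (hs : s ∈ 𝓝 x) (hy : y ∈ u) :
    DifferentiableAt 𝕜 (fun x' => f (x', y)) x := by
  have hslice : DifferentiableWithinAt 𝕜 (fun x' => f (x', y)) s x :=
    (hf _ ⟨mem_of_mem_nhds hs, hy⟩).comp x
      (differentiableWithinAt_id.prodMk (differentiableWithinAt_const y))
      fun _ hx' => ⟨hx', hy⟩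
  exact hslice.differentiableAt hs

theorem HasDerivAt.mul_eq_one_of_eventually_leftInverse {𝕜 : Type*} [NontriviallyNormedField 𝕜]
    {φ g : 𝕜 → 𝕜} {φ' g' x : 𝕜} (hφ : HasDerivAt φ φ' (g x)) (hg : HasDerivAt g g' x)
    (hinv : ∀ᶠ y in 𝓝 x, φ (g y) = y) : φ' * g' = 1 :=
  ((hφ.comp x hg).congr_of_eventuallyEq (hinv.mono fun _ h => h.symm)).unique (hasDerivAt_id x)

noncomputable def growthFlow (a : ℝ → ℝ) (t Q : ℝ) : ℝ :=
  exp (a Q * t) * Q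

theorem hasDerivAt_growthFlow {a : ℝ → ℝ} {a' Q : ℝ} (ha : HasDerivAt a a' Q) (t : ℝ) :
    HasDerivAt (growthFlow a t) (exp (a Q * t) * (1 + t * Q * a')) Q := by
  refine (((ha.mul_const t).exp).mul (hasDerivAt_id' Q)).congr_deriv ?_
  ring

theorem density_formula_no_randomness_general
    (α F₀ : ℝ → ℝ) (q : ℝ → ℝ → ℝ)
    (hα : ContDiff ℝ 1 α)
    (hF₀ : ContDiff ℝ 1 F₀)
    (f₀ : ℝ → ℝ) (hf₀ : f₀ = deriv F₀)
    (hq : ContDiffOn ℝ 1 (fun z : ℝ × ℝ => q z.1 z.2) (Set.Ioi 0 ×ˢ Set.Ici 0))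
    (himp : ∀ x > (0 : ℝ), ∀ t ≥ (0 : ℝ),
      x = Real.exp (α (F₀ (q x t)) * t) * q x t)
    (x t : ℝ) (hx : 0 < x) (ht : 0 ≤ t) :
    deriv (fun y => q y t) x
        = Real.exp (-(α (F₀ (q x t)) * t))
            / (1 + t * q x t * deriv α (F₀ (q x t)) * f₀ (q x t)) ∧
      deriv (fun y => F₀ (q y t)) x
        = f₀ (q x t) * Real.exp (-(α (F₀ (q x t)) * t))
            / (1 + t * q x t * deriv α (F₀ (q x t)) * f₀ (q x t)) := by
  set Q := q x t
  have hqx : HasDerivAt (fun y => q y t) (deriv (fun y => q y t) x) x :=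
    ((hq.differentiableOn one_ne_zero).differentiableAt_comp_prodMk_const (Ioi_mem_nhds hx)
      (mem_Ici.2 ht)).hasDerivAt
  have hF₀Q : HasDerivAt F₀ (f₀ Q) Q := hf₀ ▸ (hF₀.differentiable one_ne_zero Q).hasDerivAt
  have hαF₀ : HasDerivAt (α ∘ F₀) (deriv α (F₀ Q) * f₀ Q) Q :=
    (hα.differentiable one_ne_zero (F₀ Q)).hasDerivAt.comp Q hF₀Q
  have hinv : ∀ᶠ y in 𝓝 x, growthFlow (α ∘ F₀) t (q y t) = y :=
    eventually_of_mem (Ioi_mem_nhds hx) fun y hy => (himp y hy t ht).symm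
  have hderiv_q : deriv (fun y => q y t) x
      = (exp (α (F₀ Q) * t) * (1 + t * Q * (deriv α (F₀ Q) * f₀ Q)))⁻¹ :=
    eq_inv_of_mul_eq_one_right
      ((hasDerivAt_growthFlow hαF₀ t).mul_eq_one_of_eventually_leftInverse
        (g := fun y => q y t) hqx hinv)
  have hderiv_F₀q : deriv (fun y => F₀ (q y t)) x = f₀ Q * deriv (fun y => q y t) x :=
    HasDerivAt.deriv (f := fun y => F₀ (q y t)) (hF₀Q.comp x hqx)
  rw [hderiv_F₀q, hderiv_q, mul_inv, exp_neg, ← mul_assoc (t * Q)]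
  exact ⟨by ring, by ring⟩

/-- Implicit differentiation of the characteristics relation: if
`x = exp(α(F₀(q(x,t)))·t)·q(x,t)`, then wherever
`1 + t·q(x,t)·α′(F₀(q(x,t)))·f₀(q(x,t)) ≠ 0` one has
`∂ₓq(x,t) = exp(−α(F₀(q(x,t)))·t) / (1 + t·q·α′(F₀(q))·f₀(q))`, and consequently the
density `f(x,t) = ∂ₓ[F₀(q(x,t))]` equals
`f₀(q)·exp(−α(F₀(q))·t) / (1 + t·q·α′(F₀(q))·f₀(q))`. -/
theorem density_formula_no_randomness
    (α F₀ : ℝ → ℝ) (q : ℝ → ℝ → ℝ)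
    (hα : ContDiff ℝ 1 α)
    (hF₀ : ContDiff ℝ 1 F₀)
    (hF₀mono : StrictMonoOn F₀ (Set.Ici 0))
    (hF₀range : ∀ x ≥ (0 : ℝ), F₀ x ∈ Set.Icc (0 : ℝ) 1)
    (f₀ : ℝ → ℝ) (hf₀ : f₀ = deriv F₀)
    (hq : ContDiffOn ℝ 1 (fun z : ℝ × ℝ => q z.1 z.2) (Set.Ioi 0 ×ˢ Set.Ici 0))
    (hqpos : ∀ x > (0 : ℝ), ∀ t ≥ (0 : ℝ), 0 < q x t)
    (himp : ∀ x > (0 : ℝ), ∀ t ≥ (0 : ℝ),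
      x = Real.exp (α (F₀ (q x t)) * t) * q x t)
    (x t : ℝ) (hx : 0 < x) (ht : 0 ≤ t)
    (hden : 1 + t * q x t * deriv α (F₀ (q x t)) * f₀ (q x t) ≠ 0) :
    deriv (fun y => q y t) x
        = Real.exp (-(α (F₀ (q x t)) * t))
            / (1 + t * q x t * deriv α (F₀ (q x t)) * f₀ (q x t)) ∧
      deriv (fun y => F₀ (q y t)) x
        = f₀ (q x t) * Real.exp (-(α (F₀ (q x t)) * t))
            / (1 + t * q x t * deriv α (F₀ (q x t)) * f₀ (q x t)) :=
  density_formula_no_randomness_general α F₀ q hα hF₀ f₀ hf₀ hq himp x t hx ht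
end

section
/- Let α : [0,1] → ℝ be continuous, let F : (0,∞) × [0,∞) → [0,1] be continuously differentiable and solve the transport equation ∂_t F(x,t) + α(F(x,t))·x·∂_x F(x,t) = 0, and fix p ∈ (0,1). Suppose Q_p : [0,∞) → (0,∞) is differentiable, satisfies F(Q_p(t), t) = p for all t ≥ 0, and ∂_x F(Q_p(t), t) > 0 for all t ≥ 0. Then Q_p satisfies the ordinary differential equation Q_p′(t) = α(p)·Q_p(t), and hence Q_p(t) = exp(α(p)·t)·Q_p(0) for all t ≥ 0. -/
open Real Set Filter Topology

/-!
Differentiating the identity `F (Q t) t = p` along the quantile curve gives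
`Q' · ∂ₓF + ∂ₜF = 0`, while the transport equation evaluated on the curve gives
`∂ₜF = -α(p) · Q · ∂ₓF`; since `∂ₓF > 0` there, `Q' = α(p) · Q` for `t > 0`.
Then `Q t · exp (-α(p) t)` has zero derivative on `(0, ∞)`, hence is constant on `[0, ∞)`,
and the explicit formula also yields the one-sided derivative at `t = 0`.
-/

theorem deriv_mul_partial_add_partial_eq_zero_of_eventually_eq {F : ℝ → ℝ → ℝ} {Q : ℝ → ℝ}
    {t p : ℝ} (hF : DifferentiableAt ℝ (fun z : ℝ × ℝ => F z.1 z.2) (Q t, t))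
    (hQ : DifferentiableAt ℝ Q t) (hlevel : ∀ᶠ s in 𝓝 t, F (Q s) s = p) :
    deriv Q t * deriv (fun y => F y t) (Q t) + deriv (fun s => F (Q t) s) t = 0 := by
  set L := fderiv ℝ (fun z : ℝ × ℝ => F z.1 z.2) (Q t, t)
  have hL : HasFDerivAt (fun z : ℝ × ℝ => F z.1 z.2) L (Q t, t) := hF.hasFDerivAt
  have hx : HasDerivAt (fun y => F y t) (L (1, 0)) (Q t) :=
    hL.comp_hasDerivAt_of_eq (Q t) ((hasDerivAt_id _).prodMk (hasDerivAt_const _ _)) rfl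
  have ht : HasDerivAt (fun s => F (Q t) s) (L (0, 1)) t :=
    hL.comp_hasDerivAt_of_eq t ((hasDerivAt_const _ _).prodMk (hasDerivAt_id _)) rfl
  have hcurve : HasDerivAt (fun s => F (Q s) s) (L (deriv Q t, 1)) t :=
    hL.comp_hasDerivAt_of_eq t (hQ.hasDerivAt.prodMk (hasDerivAt_id _)) rfl
  have hconst : HasDerivAt (fun s => F (Q s) s) 0 t :=
    (hasDerivAt_const t p).congr_of_eventuallyEq hlevel
  have hsplit : ((deriv Q t, 1) : ℝ × ℝ) = deriv Q t • ((1, 0) : ℝ × ℝ) + (0, 1) := by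
    simp
  rw [hx.deriv, ht.deriv, ← smul_eq_mul, ← L.map_smul, ← L.map_add, ← hsplit]
  exact hcurve.unique hconst

theorem eq_exp_mul_of_hasDerivAt_Ioi {Q : ℝ → ℝ} {c : ℝ} (hQc : ContinuousOn Q (Ici 0))
    (hQ' : ∀ t > 0, HasDerivAt Q (c * Q t) t) {t : ℝ} (ht : 0 ≤ t) :
    Q t = exp (c * t) * Q 0 := by
  set h : ℝ → ℝ := fun s => Q s * exp (-(c * s))
  rcases ht.eq_or_lt with rfl | ht
  · simp
  have hh' : ∀ s ∈ Ioo 0 t, HasDerivAt h 0 s := fun s hs => by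
    have hexp : HasDerivAt (fun s => exp (-(c * s))) (exp (-(c * s)) * -(c * 1)) s :=
      ((hasDerivAt_id s).const_mul c).neg.exp
    exact ((hQ' s hs.1).mul hexp).congr_deriv (by ring)
  have hhc : ContinuousOn h (Icc 0 t) :=
    (hQc.mono Icc_subset_Ici_self).mul (by fun_prop)
  obtain ⟨s, -, hs⟩ := exists_hasDerivAt_eq_slope h (fun _ => 0) ht hhc hh'
  have hconst : Q t * exp (-(c * t)) = Q 0 := by
    rw [sub_zero, eq_comm, div_eq_zero_iff, sub_eq_zero] at hs
    simpa [h] using hs.resolve_right ht.ne'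
  rw [← hconst, mul_left_comm, ← exp_add]
  simp

theorem deriv_eq_of_eqOn_Ici {Q g : ℝ → ℝ} {a g' : ℝ} (hQ : DifferentiableAt ℝ Q a)
    (hg : HasDerivAt g g' a) (heq : EqOn Q g (Ici a)) : deriv Q a = g' := by
  have hu : UniqueDiffWithinAt ℝ (Ici a) a := uniqueDiffOn_Ici a a self_mem_Ici
  rw [← hQ.hasDerivAt.hasDerivWithinAt.derivWithin hu,
    (hg.hasDerivWithinAt.congr heq (heq self_mem_Ici)).derivWithin hu]

theorem quantile_ode_no_randomness_general
    (α : ℝ → ℝ)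
    (F : ℝ → ℝ → ℝ)
    (hFreg : ContDiffOn ℝ 1 (fun z : ℝ × ℝ => F z.1 z.2) (Set.Ioi 0 ×ˢ Set.Ici 0))
    (hPDE : ∀ x > (0 : ℝ), ∀ t ≥ (0 : ℝ),
      deriv (fun s => F x s) t + α (F x t) * x * deriv (fun y => F y t) x = 0)
    (p : ℝ)
    (Q : ℝ → ℝ) (hQdiff : Differentiable ℝ Q)
    (hQpos : ∀ t ≥ (0 : ℝ), 0 < Q t)
    (hQquant : ∀ t ≥ (0 : ℝ), F (Q t) t = p)
    (hfpos : ∀ t ≥ (0 : ℝ), 0 < deriv (fun y => F y t) (Q t)) :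
    (∀ t ≥ (0 : ℝ), deriv Q t = α p * Q t) ∧
      ∀ t ≥ (0 : ℝ), Q t = Real.exp (α p * t) * Q 0 := by
  have hode : ∀ t > 0, HasDerivAt Q (α p * Q t) t := fun t ht => by
    have hmem : (Q t, t) ∈ Ioi (0 : ℝ) ×ˢ Ioi (0 : ℝ) := ⟨hQpos t ht.le, ht⟩
    have hFdiff : DifferentiableAt ℝ (fun z : ℝ × ℝ => F z.1 z.2) (Q t, t) :=
      ((hFreg.mono (prod_mono le_rfl Ioi_subset_Ici_self)).contDiffAt
        ((isOpen_Ioi.prod isOpen_Ioi).mem_nhds hmem)).differentiableAt one_ne_zero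
    have hlevel : ∀ᶠ s in 𝓝 t, F (Q s) s = p := by
      filter_upwards [Ioi_mem_nhds ht] with s hs using hQquant s hs.le
    have hchain := deriv_mul_partial_add_partial_eq_zero_of_eventually_eq hFdiff (hQdiff t) hlevel
    have hpde := hPDE (Q t) (hQpos t ht.le) t ht.le
    rw [hQquant t ht.le] at hpde
    have hQ' : deriv Q t = α p * Q t :=
      mul_right_cancel₀ (hfpos t ht.le).ne' (by linarith)
    exact hQ' ▸ (hQdiff t).hasDerivAt
  have hexp : ∀ t ≥ (0 : ℝ), Q t = exp (α p * t) * Q 0 := fun t ht =>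
    eq_exp_mul_of_hasDerivAt_Ioi hQdiff.continuous.continuousOn hode ht
  refine ⟨fun t ht => ?_, hexp⟩
  rcases ht.eq_or_lt with rfl | ht
  · have hg : HasDerivAt (fun s => exp (α p * s) * Q 0) (α p * Q 0) 0 := by
      simpa using (((hasDerivAt_id (0 : ℝ)).const_mul (α p)).exp).mul_const (Q 0)
    exact deriv_eq_of_eqOn_Ici (hQdiff 0) hg hexp
  · exact (hode t ht).deriv

/-- Quantile ODE for the transport (no-randomness) income model: if `F` solves
`∂ₜF + α(F)·x·∂ₓF = 0` and `Q_p` is a differentiable `p`-quantile curve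
(`F(Q_p(t),t) = p` with `∂ₓF(Q_p(t),t) > 0`), then `Q_p′(t) = α(p)·Q_p(t)` and hence
`Q_p(t) = exp(α(p)·t)·Q_p(0)`. -/
theorem quantile_ode_no_randomness
    (α : ℝ → ℝ) (hα : Continuous α)
    (F : ℝ → ℝ → ℝ)
    (hFreg : ContDiffOn ℝ 1 (fun z : ℝ × ℝ => F z.1 z.2) (Set.Ioi 0 ×ˢ Set.Ici 0))
    (hFrange : ∀ x > (0 : ℝ), ∀ t ≥ (0 : ℝ), F x t ∈ Set.Icc (0 : ℝ) 1)
    (hPDE : ∀ x > (0 : ℝ), ∀ t ≥ (0 : ℝ),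
      deriv (fun s => F x s) t + α (F x t) * x * deriv (fun y => F y t) x = 0)
    (p : ℝ) (hp : p ∈ Set.Ioo (0 : ℝ) 1)
    (Q : ℝ → ℝ) (hQdiff : Differentiable ℝ Q)
    (hQpos : ∀ t ≥ (0 : ℝ), 0 < Q t)
    (hQquant : ∀ t ≥ (0 : ℝ), F (Q t) t = p)
    (hfpos : ∀ t ≥ (0 : ℝ), 0 < deriv (fun y => F y t) (Q t)) :
    (∀ t ≥ (0 : ℝ), deriv Q t = α p * Q t) ∧
      ∀ t ≥ (0 : ℝ), Q t = Real.exp (α p * t) * Q 0 :=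
  quantile_ode_no_randomness_general α F hFreg hPDE p Q hQdiff hQpos hQquant hfpos
end
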